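/- arXiv:1505.05433 — 2 statements merged into one kernel-verified Lean document; each statement's English description precedes it below -/
import Mathlib

section
/- Let ω ≥ 0 be a C² function on the closed Euclidean ball B̄_r ⊆ ℝⁿ satisfying Σ a_{ij} D_{ij} ω ≥ θ² ω in B_r, where λ² I ≤ a_{ij}(x) ≤ Λ² I. Then there exist constants c, C > 0 depending only on n, λ, Λ such that ω(0) ≤ C e^{−cθr} · sup_{B_r} ω. -/
/-!
Comparison with the barrier `b(x) = K ∑ᵢ cosh(θ xᵢ / Λ)`. Since `a ≤ Λ² I`, the barrier is a
supersolution: `∑ aᵢⱼ Dᵢⱼ b ≤ θ² b`. At an interior maximum of `ω - b` the Hessian of `ω - b` is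
negative semidefinite, so its trace against the positive semidefinite matrix `a` is `≤ 0`, which
gives `θ² ω ≤ θ² b` there; hence `ω ≤ b` on the ball once it holds on the sphere. On the sphere
`|x| = r` some coordinate satisfies `|xᵢ| ≥ r / √n`, so `K = sup ω / cosh(θ r / (Λ √n))` suffices,
and then `ω(0) ≤ b(0) = n K ≤ 2 n e^{-θ r / (Λ √n)} sup ω`.
-/

open Metric

/-- The second partial derivative `D_{ij} f (x)` in the coordinate directions. -/
noncomputable def D2 {n : ℕ} (f : EuclideanSpace ℝ (Fin n) → ℝ)
    (x : EuclideanSpace ℝ (Fin n)) (i j : Fin n) : ℝ :=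
  fderiv ℝ (fun y => fderiv ℝ f y (EuclideanSpace.single j (1:ℝ))) x
    (EuclideanSpace.single i (1:ℝ))

open Filter Finset Topology

theorem IsLocalMax.nonpos_of_hasDerivAt_deriv {g : ℝ → ℝ} {a d : ℝ} (h : IsLocalMax g a)
    (hc : ContinuousAt g a) (hd : HasDerivAt (deriv g) d a) : d ≤ 0 := by
  by_contra! hpos
  have hmin : IsLocalMin g a :=
    isLocalMin_of_deriv_deriv_pos (hd.deriv ▸ hpos) h.deriv_eq_zero hc
  have hconst : g =ᶠ[𝓝 a] fun _ => g a := by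
    filter_upwards [h, hmin] with t h₁ h₂ using le_antisymm h₁ h₂
  have hd0 : HasDerivAt (deriv g) 0 a :=
    (hasDerivAt_const a (0 : ℝ)).congr_of_eventuallyEq (by simpa using hconst.deriv)
  exact hpos.ne' (hd.unique hd0)

theorem IsLocalMax.fderiv_fderiv_apply_self_nonpos {E : Type*} [NormedAddCommGroup E]
    [NormedSpace ℝ E] {f : E → ℝ} {x₀ : E} (h : IsLocalMax f x₀) (hf : ContDiffAt ℝ 2 f x₀)
    (u : E) : fderiv ℝ (fderiv ℝ f) x₀ u u ≤ 0 := by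
  set ℓ : ℝ → E := fun t => x₀ + t • u
  have hℓ : ∀ t, HasDerivAt ℓ u t := fun t => by
    simpa only [one_smul] using ((hasDerivAt_id' t).smul_const u).const_add x₀
  have hℓ0 : ℓ 0 = x₀ := by simp [ℓ]
  have hℓx₀ : Tendsto ℓ (𝓝 0) (𝓝 x₀) := hℓ0 ▸ (hℓ 0).continuousAt
  have hderiv : deriv (f ∘ ℓ) =ᶠ[𝓝 0] fun t => fderiv ℝ f (ℓ t) u := by
    filter_upwards [hℓx₀.eventually ((hf.eventually (by simp)).mono
      fun y hy => hy.differentiableAt (by simp))] with t ht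
    exact (ht.hasFDerivAt.comp_hasDerivAt t (hℓ t)).deriv
  have hsecond : HasDerivAt (fun t => fderiv ℝ f (ℓ t) u) (fderiv ℝ (fderiv ℝ f) x₀ u u) 0 := by
    have hf' : HasFDerivAt (fderiv ℝ f) (fderiv ℝ (fderiv ℝ f) x₀) (ℓ 0) := hℓ0 ▸
      ((hf.fderiv_right (m := 1) (by norm_num)).differentiableAt (by simp)).hasFDerivAt
    exact (ContinuousLinearMap.apply ℝ ℝ u).hasFDerivAt.comp_hasDerivAt 0
      (hf'.comp_hasDerivAt 0 (hℓ 0))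
  rw [← hℓ0] at h hf
  exact (h.comp_continuous (hℓ 0).continuousAt).nonpos_of_hasDerivAt_deriv
    (hf.continuousAt.comp (hℓ 0).continuousAt) (hsecond.congr_of_eventuallyEq hderiv)

theorem Matrix.PosSemidef.sum_mul_nonpos {ι : Type*} [Fintype ι] {A H : Matrix ι ι ℝ}
    (hA : A.PosSemidef) (hH : ∀ v : ι → ℝ, ∑ i, ∑ j, H i j * v i * v j ≤ 0) :
    ∑ i, ∑ j, A i j * H i j ≤ 0 := by
  obtain ⟨m, w, rfl⟩ := Matrix.posSemidef_iff_eq_sum_vecMulVec.mp hA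
  calc ∑ i, ∑ j, (∑ k, Matrix.vecMulVec (w k) (star (w k))) i j * H i j
      = ∑ k, ∑ i, ∑ j, H i j * w k i * w k j := by
        simp only [Matrix.sum_apply, Matrix.vecMulVec_apply, star_trivial, sum_mul]
        refine (sum_congr rfl fun i _ => ?_).trans Finset.sum_comm
        refine Finset.sum_comm.trans (sum_congr rfl fun k _ => sum_congr rfl fun j _ => ?_)
        ring
    _ ≤ 0 := sum_nonpos fun k _ => hH (w k)

theorem Matrix.posSemidef_of_sum_mul_mul_nonneg {ι : Type*} [Fintype ι] {A : Matrix ι ι ℝ}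
    (hA : ∀ i j, A i j = A j i) (h : ∀ v : ι → ℝ, 0 ≤ ∑ i, ∑ j, A i j * v i * v j) :
    A.PosSemidef := by
  refine .of_dotProduct_mulVec_nonneg (Matrix.IsHermitian.ext fun i j => (hA j i)) fun v => ?_
  have hquad : dotProduct (star v) (A.mulVec v) = ∑ i, ∑ j, A i j * v i * v j := by
    simp only [dotProduct, Matrix.mulVec, mul_sum, star_trivial]
    exact sum_congr rfl fun i _ => sum_congr rfl fun j _ => by ring
  exact hquad ▸ h v

theorem Matrix.diag_le_of_sum_mul_mul_le {ι : Type*} [Fintype ι] [DecidableEq ι]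
    {A : Matrix ι ι ℝ} {μ : ℝ}
    (h : ∀ v : ι → ℝ, ∑ i, ∑ j, A i j * v i * v j ≤ μ * ∑ i, v i ^ 2) (i : ι) : A i i ≤ μ := by
  simpa [Pi.single_apply] using h (Pi.single i 1)

theorem EuclideanSpace.exists_norm_sq_le_card_mul_sq {ι : Type*} [Fintype ι] [Nonempty ι]
    (x : EuclideanSpace ℝ ι) : ∃ i, ‖x‖ ^ 2 ≤ Fintype.card ι * x i ^ 2 := by
  have hcard : (0 : ℝ) < Fintype.card ι := by exact_mod_cast Fintype.card_pos
  obtain ⟨i, -, hi⟩ := exists_le_of_sum_le univ_nonempty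
    (f := fun _ => ‖x‖ ^ 2 / Fintype.card ι) (g := fun i => x i ^ 2)
    (by rw [sum_const, card_univ, nsmul_eq_mul, mul_div_cancel₀ _ hcard.ne',
      EuclideanSpace.real_norm_sq_eq])
  exact ⟨i, (div_le_iff₀' hcard).mp hi⟩

theorem cosh_mul_norm_div_sqrt_le_sum_cosh {ι : Type*} [Fintype ι] [Nonempty ι] (α : ℝ)
    (x : EuclideanSpace ℝ ι) :
    Real.cosh (α * ‖x‖ / √(Fintype.card ι)) ≤ ∑ i, Real.cosh (α * x i) := by
  obtain ⟨i, hi⟩ := x.exists_norm_sq_le_card_mul_sq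
  have hcard : (0 : ℝ) < √(Fintype.card ι) := Real.sqrt_pos.mpr (by exact_mod_cast Fintype.card_pos)
  have hnorm : ‖x‖ / √(Fintype.card ι) ≤ |x i| := by
    rw [div_le_iff₀ hcard]
    refine (pow_le_pow_iff_left₀ (norm_nonneg x) (by positivity) two_ne_zero).mp ?_
    rw [mul_pow, sq_abs, Real.sq_sqrt (Nat.cast_nonneg _)]
    linarith
  calc Real.cosh (α * ‖x‖ / √(Fintype.card ι)) ≤ Real.cosh (α * x i) := by
        rw [Real.cosh_le_cosh, mul_div_assoc, abs_mul, abs_mul,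
          abs_of_nonneg (div_nonneg (norm_nonneg x) hcard.le)]
        exact mul_le_mul_of_nonneg_left hnorm (abs_nonneg α)
    _ ≤ ∑ i, Real.cosh (α * x i) :=
        single_le_sum (f := fun j => Real.cosh (α * x j)) (fun j _ => (Real.cosh_pos _).le)
          (mem_univ i)

theorem Real.inv_cosh_le_two_mul_exp_neg (s : ℝ) : (Real.cosh s)⁻¹ ≤ 2 * Real.exp (-s) := by
  have hcosh : Real.exp s / 2 ≤ Real.cosh s := by
    rw [Real.cosh_eq]
    linarith [Real.exp_pos (-s)]
  calc (Real.cosh s)⁻¹ ≤ (Real.exp s / 2)⁻¹ := inv_anti₀ (by positivity) hcosh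
    _ = 2 * Real.exp (-s) := by rw [inv_div, Real.exp_neg, div_eq_mul_inv]

section

variable {n : ℕ}

theorem D2_eq_fderiv_fderiv {f : EuclideanSpace ℝ (Fin n) → ℝ} {x : EuclideanSpace ℝ (Fin n)}
    (hf : DifferentiableAt ℝ (fderiv ℝ f) x) (i j : Fin n) :
    D2 f x i j = fderiv ℝ (fderiv ℝ f) x (EuclideanSpace.single i 1)
      (EuclideanSpace.single j 1) := by
  unfold D2
  rw [fderiv_clm_apply hf (differentiableAt_const _)]
  simp

theorem D2_sub {f g : EuclideanSpace ℝ (Fin n) → ℝ} {x : EuclideanSpace ℝ (Fin n)}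
    (hf : ContDiffAt ℝ 2 f x) (hg : ContDiffAt ℝ 2 g x) (i j : Fin n) :
    D2 (f - g) x i j = D2 f x i j - D2 g x i j := by
  have hdiff {h : EuclideanSpace ℝ (Fin n) → ℝ} (hh : ContDiffAt ℝ 2 h x) :
      DifferentiableAt ℝ (fderiv ℝ h) x :=
    (hh.fderiv_right (m := 1) (by norm_num)).differentiableAt (by simp)
  have hfg : fderiv ℝ (f - g) =ᶠ[𝓝 x] fderiv ℝ f - fderiv ℝ g := by
    filter_upwards [hf.eventually (by simp), hg.eventually (by simp)] with y hfy hgy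
    exact fderiv_sub (hfy.differentiableAt (by simp)) (hgy.differentiableAt (by simp))
  rw [D2_eq_fderiv_fderiv (hdiff (h := f - g) (hf.sub hg)), D2_eq_fderiv_fderiv (hdiff hf),
    D2_eq_fderiv_fderiv (hdiff hg), hfg.fderiv_eq, fderiv_sub (hdiff hf) (hdiff hg)]
  rfl

theorem IsLocalMax.sum_D2_mul_mul_nonpos {f : EuclideanSpace ℝ (Fin n) → ℝ}
    {x₀ : EuclideanSpace ℝ (Fin n)} (h : IsLocalMax f x₀) (hf : ContDiffAt ℝ 2 f x₀)
    (v : Fin n → ℝ) : ∑ i, ∑ j, D2 f x₀ i j * v i * v j ≤ 0 := by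
  set B := fderiv ℝ (fderiv ℝ f) x₀
  have hB : ∑ i, ∑ j, D2 f x₀ i j * v i * v j =
      B (∑ i, v i • EuclideanSpace.single i 1) (∑ j, v j • EuclideanSpace.single j 1) := by
    simp only [map_sum, map_smul, _root_.sum_apply, _root_.smul_apply,
      smul_eq_mul, mul_sum, D2_eq_fderiv_fderiv
        ((hf.fderiv_right (m := 1) (by norm_num)).differentiableAt (by simp))]
    rw [sum_comm]
    exact sum_congr rfl fun i _ => sum_congr rfl fun j _ => by ring
  rw [hB]
  exact h.fderiv_fderiv_apply_self_nonpos hf _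

theorem le_of_subsolution_of_supersolution {a : EuclideanSpace ℝ (Fin n) → Matrix (Fin n) (Fin n) ℝ}
    {ω b : EuclideanSpace ℝ (Fin n) → ℝ} {c : EuclideanSpace ℝ (Fin n)} {r κ : ℝ} (hκ : 0 < κ)
    (ha : ∀ x ∈ ball c r, (a x).PosSemidef)
    (hω : ContDiffOn ℝ 2 ω (closedBall c r)) (hb : ContDiffOn ℝ 2 b (closedBall c r))
    (hωsub : ∀ x ∈ ball c r, κ * ω x ≤ ∑ i, ∑ j, a x i j * D2 ω x i j)
    (hbsup : ∀ x ∈ ball c r, ∑ i, ∑ j, a x i j * D2 b x i j ≤ κ * b x)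
    (hbdry : ∀ x ∈ sphere c r, ω x ≤ b x) :
    ∀ x ∈ closedBall c r, ω x ≤ b x := by
  intro x hx
  obtain ⟨x₀, hx₀, hmax⟩ := (isCompact_closedBall c r).exists_isMaxOn ⟨x, hx⟩
    (hω.continuousOn.sub hb.continuousOn)
  suffices ω x₀ ≤ b x₀ by
    have hle := isMaxOn_iff.mp hmax x hx
    simp only [Pi.sub_apply] at hle
    linarith
  rw [← ball_union_sphere] at hx₀
  rcases hx₀ with hx₀ball | hx₀sphere
  · have hnhds : closedBall c r ∈ 𝓝 x₀ :=
      mem_of_superset (isOpen_ball.mem_nhds hx₀ball) ball_subset_closedBall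
    have hωx₀ := hω.contDiffAt hnhds
    have hbx₀ := hb.contDiffAt hnhds
    have hHess : ∀ v : Fin n → ℝ, ∑ i, ∑ j, D2 (ω - b) x₀ i j * v i * v j ≤ 0 :=
      (hmax.isLocalMax hnhds).sum_D2_mul_mul_nonpos (hωx₀.sub hbx₀)
    have hcomp : ∑ i, ∑ j, a x₀ i j * D2 ω x₀ i j ≤ ∑ i, ∑ j, a x₀ i j * D2 b x₀ i j := by
      have htrace := (ha x₀ hx₀ball).sum_mul_nonpos hHess
      simp only [D2_sub hωx₀ hbx₀, mul_sub, sum_sub_distrib] at htrace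
      linarith
    exact le_of_mul_le_mul_left ((hωsub x₀ hx₀ball).trans (hcomp.trans (hbsup x₀ hx₀ball))) hκ
  · exact hbdry x₀ hx₀sphere

theorem fderiv_sum_comp_apply_single {φ φ' : ℝ → ℝ} (hφ : ∀ t, HasDerivAt φ (φ' t) t)
    (y : EuclideanSpace ℝ (Fin n)) (j : Fin n) :
    fderiv ℝ (fun x : EuclideanSpace ℝ (Fin n) => ∑ i, φ (x i)) y
      (EuclideanSpace.single j 1) = φ' (y j) := by
  have hsum : HasFDerivAt (fun x : EuclideanSpace ℝ (Fin n) => ∑ i, φ (x i))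
      (∑ i, φ' (y i) • EuclideanSpace.proj i) y :=
    HasFDerivAt.fun_sum fun i _ => (hφ (y i)).comp_hasFDerivAt y
      (EuclideanSpace.proj i : EuclideanSpace ℝ (Fin n) →L[ℝ] ℝ).hasFDerivAt
  rw [hsum.fderiv]
  simp

theorem D2_sum_comp {φ φ' φ'' : ℝ → ℝ} (hφ : ∀ t, HasDerivAt φ (φ' t) t)
    (hφ' : ∀ t, HasDerivAt φ' (φ'' t) t) (x : EuclideanSpace ℝ (Fin n)) (i j : Fin n) :
    D2 (fun x : EuclideanSpace ℝ (Fin n) => ∑ k, φ (x k)) x i j =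
      if i = j then φ'' (x i) else 0 := by
  unfold D2
  simp only [fderiv_sum_comp_apply_single hφ]
  have hφ'j : HasFDerivAt (fun y : EuclideanSpace ℝ (Fin n) => φ' (y j))
      (φ'' (x j) • EuclideanSpace.proj j) x :=
    (hφ' (x j)).comp_hasFDerivAt x
      (EuclideanSpace.proj j : EuclideanSpace ℝ (Fin n) →L[ℝ] ℝ).hasFDerivAt
  rw [hφ'j.fderiv]
  split_ifs with h <;> simp [h, Ne.symm]

noncomputable def coshBarrier (K α : ℝ) (x : EuclideanSpace ℝ (Fin n)) : ℝ :=
  ∑ i, K * Real.cosh (α * x i)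

theorem D2_coshBarrier (K α : ℝ) (x : EuclideanSpace ℝ (Fin n)) (i j : Fin n) :
    D2 (coshBarrier K α) x i j = if i = j then K * α ^ 2 * Real.cosh (α * x i) else 0 := by
  refine D2_sum_comp (φ := fun t => K * Real.cosh (α * t))
    (φ' := fun t => K * α * Real.sinh (α * t)) (φ'' := fun t => K * α ^ 2 * Real.cosh (α * t))
    (fun t => ?_) (fun t => ?_) x i j
  · simpa [mul_comm, mul_left_comm, mul_assoc] using
      (((hasDerivAt_id t).const_mul α).cosh).const_mul K
  · simpa [mul_comm, mul_left_comm, mul_assoc, sq] using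
      (((hasDerivAt_id t).const_mul α).sinh).const_mul (K * α)

theorem contDiff_coshBarrier (K α : ℝ) {m : WithTop ℕ∞} :
    ContDiff ℝ m (coshBarrier (n := n) K α) := by
  unfold coshBarrier
  fun_prop

theorem sum_mul_D2_coshBarrier_le {A : Matrix (Fin n) (Fin n) ℝ} {μ K : ℝ}
    (hA : ∀ i, A i i ≤ μ) (hK : 0 ≤ K) (α : ℝ) (x : EuclideanSpace ℝ (Fin n)) :
    ∑ i, ∑ j, A i j * D2 (coshBarrier K α) x i j ≤ μ * α ^ 2 * coshBarrier K α x := by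
  simp only [D2_coshBarrier, mul_ite, mul_zero, sum_ite_eq, mem_univ, if_true, coshBarrier, mul_sum]
  refine sum_le_sum fun i _ => ?_
  have := mul_le_mul_of_nonneg_right (hA i)
    (by positivity : 0 ≤ K * α ^ 2 * Real.cosh (α * x i))
  linarith

theorem mul_cosh_le_coshBarrier (hn : 0 < n) {K : ℝ} (hK : 0 ≤ K) (α : ℝ)
    (x : EuclideanSpace ℝ (Fin n)) : K * Real.cosh (α * ‖x‖ / √n) ≤ coshBarrier K α x := by
  have : Nonempty (Fin n) := ⟨⟨0, hn⟩⟩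
  have hcosh := cosh_mul_norm_div_sqrt_le_sum_cosh α x
  rw [Fintype.card_fin] at hcosh
  rw [coshBarrier, ← mul_sum]
  exact mul_le_mul_of_nonneg_left hcosh hK

theorem coshBarrier_zero (K α : ℝ) : coshBarrier K α (0 : EuclideanSpace ℝ (Fin n)) = n * K := by
  simp [coshBarrier]

theorem le_coshBarrier_of_subsolution (hn : 0 < n)
    {a : EuclideanSpace ℝ (Fin n) → Matrix (Fin n) (Fin n) ℝ} {ω : EuclideanSpace ℝ (Fin n) → ℝ}
    {Λ θ r M : ℝ} (hΛ : 0 < Λ) (hθ : 0 < θ) (hM : 0 ≤ M)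
    (ha : ∀ x ∈ ball 0 r, (a x).PosSemidef) (hdiag : ∀ x ∈ ball 0 r, ∀ i, a x i i ≤ Λ ^ 2)
    (hω : ContDiffOn ℝ 2 ω (closedBall 0 r))
    (hsub : ∀ x ∈ ball 0 r, θ ^ 2 * ω x ≤ ∑ i, ∑ j, a x i j * D2 ω x i j)
    (hbdry : ∀ x ∈ sphere 0 r, ω x ≤ M) :
    ∀ x ∈ closedBall 0 r, ω x ≤ coshBarrier (M / Real.cosh (θ / Λ * r / √n)) (θ / Λ) x := by
  set s := θ / Λ * r / √n
  have hK : 0 ≤ M / Real.cosh s := div_nonneg hM (Real.cosh_pos s).le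
  refine le_of_subsolution_of_supersolution (pow_pos hθ 2) ha hω
    (contDiff_coshBarrier _ _).contDiffOn hsub (fun x hx => ?_) (fun x hx => ?_)
  · have hsup := sum_mul_D2_coshBarrier_le (hdiag x hx) hK (θ / Λ) x
    rwa [div_pow, mul_div_cancel₀ _ (pow_ne_zero 2 hΛ.ne')] at hsup
  · calc ω x ≤ M / Real.cosh s * Real.cosh s := by
          rw [div_mul_cancel₀ M (Real.cosh_pos s).ne']
          exact hbdry x hx
      _ ≤ coshBarrier (M / Real.cosh s) (θ / Λ) x := by
          simpa [s, ← mem_sphere_zero_iff_norm.mp hx] using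
            mul_cosh_le_coshBarrier hn hK (θ / Λ) x

end

/-- Exponential decay at the center for nonnegative subsolutions of
`∑ aᵢⱼ Dᵢⱼ ω ≥ θ² ω` with uniformly elliptic coefficients `λ² I ≤ a ≤ Λ² I`. -/
theorem stmt2 {n : ℕ} (hn : 0 < n) (lam Lam : ℝ) (hlam : 0 < lam) (hLam : lam ≤ Lam) :
    ∃ c > (0:ℝ), ∃ C > (0:ℝ),
      ∀ (θ r : ℝ), 0 < θ → 0 < r →
      ∀ (a : EuclideanSpace ℝ (Fin n) → Matrix (Fin n) (Fin n) ℝ)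
        (ω : EuclideanSpace ℝ (Fin n) → ℝ),
        (∀ x i j, a x i j = a x j i) →
        (∀ x (v : Fin n → ℝ), lam^2 * ∑ i, (v i)^2 ≤ ∑ i, ∑ j, a x i j * v i * v j) →
        (∀ x (v : Fin n → ℝ), ∑ i, ∑ j, a x i j * v i * v j ≤ Lam^2 * ∑ i, (v i)^2) →
        ContDiffOn ℝ 2 ω (closedBall 0 r) →
        (∀ x ∈ closedBall (0 : EuclideanSpace ℝ (Fin n)) r, 0 ≤ ω x) →
        (∀ x ∈ ball (0 : EuclideanSpace ℝ (Fin n)) r,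
            θ^2 * ω x ≤ ∑ i, ∑ j, a x i j * D2 ω x i j) →
        ω 0 ≤ C * Real.exp (-(c * θ * r)) * sSup (ω '' closedBall 0 r) := by
  have hLam0 : 0 < Lam := hlam.trans_le hLam
  refine ⟨1 / (Lam * √n), by positivity, 2 * n, by positivity, ?_⟩
  intro θ r hθ hr a ω hsym hlower hupper hω hnonneg hsub
  set M := sSup (ω '' closedBall 0 r)
  set s := θ / Lam * r / √n
  have h0 : (0 : EuclideanSpace ℝ (Fin n)) ∈ closedBall 0 r := mem_closedBall_self hr.le
  have hM : ∀ x ∈ closedBall 0 r, ω x ≤ M := fun x hx =>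
    le_csSup ((isCompact_closedBall 0 r).image_of_continuousOn hω.continuousOn).bddAbove
      ⟨x, hx, rfl⟩
  have hM0 : 0 ≤ M := (hnonneg 0 h0).trans (hM 0 h0)
  have hbarrier := le_coshBarrier_of_subsolution hn hLam0 hθ hM0
    (fun x _ => Matrix.posSemidef_of_sum_mul_mul_nonneg (hsym x)
      fun v => le_trans (by positivity) (hlower x v))
    (fun x _ => Matrix.diag_le_of_sum_mul_mul_le (hupper x)) hω hsub
    (fun x hx => hM x (sphere_subset_closedBall hx)) 0 h0
  rw [coshBarrier_zero] at hbarrier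
  calc ω 0 ≤ n * M * (Real.cosh s)⁻¹ := by rwa [mul_assoc, ← div_eq_mul_inv]
    _ ≤ n * M * (2 * Real.exp (-s)) :=
        mul_le_mul_of_nonneg_left (Real.inv_cosh_le_two_mul_exp_neg s) (by positivity)
    _ = 2 * n * Real.exp (-(1 / (Lam * √n) * θ * r)) * M := by
        rw [show s = 1 / (Lam * √n) * θ * r by ring]; ring
end

section
/- Let u be continuous on the closed annulus {R ≤ |x − w| ≤ 3R/2} ⊆ ℝ², subharmonic in its interior, with u ≤ 0 on ∂B_R(w) and u ≤ M on ∂B_{3R/2}(w), where M ≥ 0. Then for all x in the annulus, u(x) ≤ (M/(R log(3/2)))·(|x − w| − R); i.e. u grows at most linearly away from the inner sphere with slope M/(R log(3/2)). -/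
/-!
Compare `u` with the radial harmonic function `c log (|x - w| / R)`, `c = M / log (3/2)`, which
vanishes on the inner circle and equals `M` on the outer one. To keep the maximum principle
elementary, perturb it: `u + ε |x - w|² - c log |x - w|` has Laplacian `Δu + 4ε > 0`, whereas at an
interior maximum every second directional derivative is `≤ 0`. Its maximum over the closed annulus
is therefore attained on a boundary circle, where it is at most `ε (3R/2)² - c log R`. Letting
`ε → 0` gives `u ≤ c log (|x - w| / R)`, and `log t ≤ t - 1` turns this into the linear bound.
-/

/-- The Laplacian as the sum of second partial derivatives in the coordinate directions. -/
noncomputable def lapl (f : EuclideanSpace ℝ (Fin 2) → ℝ)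
    (x : EuclideanSpace ℝ (Fin 2)) : ℝ :=
  ∑ i, fderiv ℝ (fun y => fderiv ℝ f y (EuclideanSpace.single i (1:ℝ))) x
    (EuclideanSpace.single i (1:ℝ))

open Filter Topology

theorem IsLocalMax.deriv_deriv_nonpos {f : ℝ → ℝ} {a : ℝ} (h : IsLocalMax f a)
    (hc : ContinuousAt f a) : deriv (deriv f) a ≤ 0 := by
  by_contra! hpos
  have hmin : IsLocalMin f a := isLocalMin_of_deriv_deriv_pos hpos h.deriv_eq_zero hc
  have hconst : f =ᶠ[𝓝 a] fun _ => f a := (hmin.and h).mono fun _ hy => le_antisymm hy.2 hy.1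
  have hderiv : deriv f =ᶠ[𝓝 a] fun _ => 0 := by simpa using hconst.deriv
  simp [hderiv.deriv_eq] at hpos

theorem IsLocalMax.fderiv_fderiv_apply_nonpos {E : Type*} [NormedAddCommGroup E]
    [NormedSpace ℝ E] {F : E → ℝ} {x : E} (h : IsLocalMax F x) (hF : ContDiffAt ℝ 2 F x)
    (v : E) : fderiv ℝ (fun y => fderiv ℝ F y v) x v ≤ 0 := by
  set ℓ : ℝ → E := fun t => x + t • v
  have hℓ : ∀ t, HasDerivAt ℓ v t := fun t =>
    (by simpa using (hasDerivAt_id t).smul_const v : HasDerivAt (· • v) v t).const_add x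
  have hℓ0 : ℓ 0 = x := by simp [ℓ]
  have hℓx : Tendsto ℓ (𝓝 0) (𝓝 x) := hℓ0 ▸ (hℓ 0).continuousAt.tendsto
  have hdiff : ∀ᶠ t in 𝓝 0, DifferentiableAt ℝ F (ℓ t) :=
    hℓx.eventually ((hF.eventually (by simp)).mono fun _ hy => hy.differentiableAt (by simp))
  have hderiv : deriv (F ∘ ℓ) =ᶠ[𝓝 0] fun t => fderiv ℝ F (ℓ t) v :=
    hdiff.mono fun t ht => (ht.hasFDerivAt.comp_hasDerivAt t (hℓ t)).deriv
  have hG : DifferentiableAt ℝ (fun y => fderiv ℝ F y v) x :=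
    ((hF.fderiv_right (m := 1) (by norm_num)).differentiableAt (by simp)).clm_apply
      (differentiableAt_const v)
  have hG' : HasDerivAt (fun t => fderiv ℝ F (ℓ t) v)
      (fderiv ℝ (fun y => fderiv ℝ F y v) x v) 0 := by
    have := hG.hasFDerivAt
    rw [← hℓ0] at this ⊢
    exact this.comp_hasDerivAt 0 (hℓ 0)
  have hmax : IsLocalMax (F ∘ ℓ) 0 := (hℓ0 ▸ h).comp_continuous (hℓ 0).continuousAt
  have hcont : ContinuousAt (F ∘ ℓ) 0 :=
    (hℓ0 ▸ hF.continuousAt).comp (hℓ 0).continuousAt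
  simpa [hderiv.deriv_eq, hG'.deriv] using hmax.deriv_deriv_nonpos hcont

local notation "ℝ²" => EuclideanSpace ℝ (Fin 2)

theorem lapl_add {f g : ℝ² → ℝ} {x : ℝ²} (hf : ContDiffAt ℝ 2 f x) (hg : ContDiffAt ℝ 2 g x) :
    lapl (fun y => f y + g y) x = lapl f x + lapl g x := by
  have hdiff {φ : ℝ² → ℝ} (hφ : ContDiffAt ℝ 2 φ x) : ∀ᶠ y in 𝓝 x, DifferentiableAt ℝ φ y :=
    (hφ.eventually (by simp)).mono fun _ hy => hy.differentiableAt (by simp)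
  have hdiff' {φ : ℝ² → ℝ} (hφ : ContDiffAt ℝ 2 φ x) (v : ℝ²) :
      DifferentiableAt ℝ (fun y => fderiv ℝ φ y v) x :=
    ((hφ.fderiv_right (m := 1) (by norm_num)).differentiableAt (by simp)).clm_apply
      (differentiableAt_const v)
  simp only [lapl, ← Finset.sum_add_distrib]
  refine Finset.sum_congr rfl fun i _ => ?_
  set e : ℝ² := EuclideanSpace.single i 1
  have hsum : (fun y => fderiv ℝ (fun y => f y + g y) y e) =ᶠ[𝓝 x]
      fun y => fderiv ℝ f y e + fderiv ℝ g y e :=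
    ((hdiff hf).and (hdiff hg)).mono fun y hy => by
      dsimp only
      rw [fderiv_fun_add hy.1 hy.2]
      rfl
  rw [hsum.fderiv_eq, fderiv_fun_add (hdiff' hf e) (hdiff' hg e)]
  rfl

theorem lapl_nonpos_of_isLocalMax {F : ℝ² → ℝ} {x : ℝ²} (h : IsLocalMax F x)
    (hF : ContDiffAt ℝ 2 F x) : lapl F x ≤ 0 :=
  Finset.sum_nonpos fun _ _ => h.fderiv_fderiv_apply_nonpos hF _

theorem lapl_comp_norm_sub_sq {h h' : ℝ → ℝ} {h'' : ℝ} {w x : ℝ²}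
    (hh : ∀ᶠ s in 𝓝 (‖x - w‖ ^ 2), HasDerivAt h (h' s) s)
    (hh' : HasDerivAt h' h'' (‖x - w‖ ^ 2)) :
    lapl (fun y => h (‖y - w‖ ^ 2)) x = 4 * (h' (‖x - w‖ ^ 2) + ‖x - w‖ ^ 2 * h'') := by
  have hq (y : ℝ²) : HasFDerivAt (fun y => ‖y - w‖ ^ 2) (2 • innerSL ℝ (y - w)) y := by
    simpa using ((hasFDerivAt_id y).sub_const w).norm_sq
  have hqx : Tendsto (fun y : ℝ² => ‖y - w‖ ^ 2) (𝓝 x) (𝓝 (‖x - w‖ ^ 2)) :=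
    (hq x).continuousAt.tendsto
  have key (i : Fin 2) :
      fderiv ℝ (fun y => fderiv ℝ (fun y => h (‖y - w‖ ^ 2)) y (EuclideanSpace.single i 1)) x
        (EuclideanSpace.single i 1) = 4 * h'' * (x i - w i) ^ 2 + 2 * h' (‖x - w‖ ^ 2) := by
    have hderiv : (fun y => fderiv ℝ (fun y => h (‖y - w‖ ^ 2)) y (EuclideanSpace.single i 1))
        =ᶠ[𝓝 x] fun y => h' (‖y - w‖ ^ 2) * (2 * (y i - w i)) :=
      (hqx.eventually hh).mono fun y hy => by
        dsimp only
        rw [HasFDerivAt.fderiv (f := fun y => h (‖y - w‖ ^ 2)) (hy.comp_hasFDerivAt y (hq y))]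
        simp [EuclideanSpace.inner_single_right]
    have hcoord : HasFDerivAt (fun y : ℝ² => 2 * (y i - w i))
        ((2 : ℝ) • (EuclideanSpace.proj i : ℝ² →L[ℝ] ℝ)) x :=
      ((EuclideanSpace.proj i : ℝ² →L[ℝ] ℝ).hasFDerivAt.sub_const (w i)).const_mul 2
    rw [hderiv.fderiv_eq, HasFDerivAt.fderiv
      (f := fun y => h' (‖y - w‖ ^ 2) * (2 * (y i - w i)))
      ((hh'.comp_hasFDerivAt x (hq x)).mul hcoord)]
    simp only [Function.comp_apply, map_sub, add_apply, smul_apply, PiLp.proj_apply,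
      PiLp.single_eq_same, smul_eq_mul, mul_one, sub_apply, coe_innerSL_apply,
      EuclideanSpace.inner_single_right, Real.ringHom_apply, one_mul, nsmul_eq_mul,
      Nat.cast_ofNat]
    ring
  simp only [lapl, key, Finset.sum_add_distrib, ← Finset.mul_sum, ← PiLp.sub_apply,
    ← EuclideanSpace.real_norm_sq_eq, Finset.sum_const, Finset.card_univ, Fintype.card_fin]
  ring

noncomputable def logBarrier (ε c : ℝ) (w y : ℝ²) : ℝ :=
  ε * ‖y - w‖ ^ 2 - c * Real.log ‖y - w‖

theorem lapl_logBarrier (ε c : ℝ) {w x : ℝ²} (hx : x ≠ w) :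
    lapl (logBarrier ε c w) x = 4 * ε := by
  have hs : 0 < ‖x - w‖ ^ 2 := pow_pos (norm_pos_iff.2 (sub_ne_zero.2 hx)) 2
  have hradial : logBarrier ε c w =
      fun y => ε * ‖y - w‖ ^ 2 - c / 2 * Real.log (‖y - w‖ ^ 2) := by
    funext y
    rw [logBarrier, Real.log_pow]
    ring
  have hh : ∀ᶠ s in 𝓝 (‖x - w‖ ^ 2), HasDerivAt (fun s => ε * s - c / 2 * Real.log s)
      (ε - c / 2 * s⁻¹) s :=
    (eventually_ne_nhds hs.ne').mono fun s hs => by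
      simpa using ((hasDerivAt_id s).const_mul ε).fun_sub ((Real.hasDerivAt_log hs).const_mul (c / 2))
  have hh' : HasDerivAt (fun s => ε - c / 2 * s⁻¹) (c / 2 * ((‖x - w‖ ^ 2) ^ 2)⁻¹)
      (‖x - w‖ ^ 2) := by
    simpa using ((hasDerivAt_inv hs.ne').const_mul (c / 2)).const_sub ε
  rw [hradial, lapl_comp_norm_sub_sq hh hh']
  field_simp
  ring

theorem contDiffAt_logBarrier (ε c : ℝ) {w x : ℝ²} (hx : x ≠ w) :
    ContDiffAt ℝ 2 (logBarrier ε c w) x := by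
  have hnorm : ContDiffAt ℝ 2 (fun y : ℝ² => ‖y - w‖) x :=
    (contDiffAt_norm ℝ (sub_ne_zero.2 hx)).comp x (contDiffAt_id.sub contDiffAt_const)
  exact (contDiffAt_const.mul (hnorm.pow 2)).sub
    (contDiffAt_const.mul (hnorm.log (by simpa [sub_eq_zero] using hx)))

theorem exists_isMaxOn_notMem_of_lapl_pos {K U : Set ℝ²} {F : ℝ² → ℝ} (hK : IsCompact K)
    (hKne : K.Nonempty) (hU : IsOpen U) (hUK : U ⊆ K) (hF : ContinuousOn F K)
    (hF₂ : ∀ x ∈ U, ContDiffAt ℝ 2 F x) (hlapl : ∀ x ∈ U, 0 < lapl F x) :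
    ∃ x₀ ∈ K, x₀ ∉ U ∧ IsMaxOn F K x₀ := by
  obtain ⟨x₀, hx₀K, hmax⟩ := hK.exists_isMaxOn hKne hF
  refine ⟨x₀, hx₀K, fun hx₀U => ?_, hmax⟩
  have hlocal : IsLocalMax F x₀ := hmax.isLocalMax (mem_of_superset (hU.mem_nhds hx₀U) hUK)
  exact (lapl_nonpos_of_isLocalMax hlocal (hF₂ x₀ hx₀U)).not_gt (hlapl x₀ hx₀U)

section Annulus

variable {R₁ R₂ c : ℝ} {w : ℝ²} {u : ℝ² → ℝ}

theorem add_logBarrier_le_of_lapl_nonneg (hR₁ : 0 < R₁)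
    (hcont : ContinuousOn u {x | R₁ ≤ ‖x - w‖ ∧ ‖x - w‖ ≤ R₂})
    (hC2 : ContDiffOn ℝ 2 u {x | R₁ < ‖x - w‖ ∧ ‖x - w‖ < R₂})
    (hsub : ∀ x, R₁ < ‖x - w‖ → ‖x - w‖ < R₂ → 0 ≤ lapl u x)
    (hinner : ∀ x, ‖x - w‖ = R₁ → u x ≤ 0)
    (houter : ∀ x, ‖x - w‖ = R₂ → u x ≤ c * (Real.log R₂ - Real.log R₁))
    {ε : ℝ} (hε : 0 < ε) {x : ℝ²} (hx₁ : R₁ ≤ ‖x - w‖) (hx₂ : ‖x - w‖ ≤ R₂) :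
    u x + logBarrier ε c w x ≤ ε * R₂ ^ 2 - c * Real.log R₁ := by
  set K : Set ℝ² := {x | R₁ ≤ ‖x - w‖ ∧ ‖x - w‖ ≤ R₂}
  set U : Set ℝ² := {x | R₁ < ‖x - w‖ ∧ ‖x - w‖ < R₂}
  have hnorm : Continuous fun y : ℝ² => ‖y - w‖ := by fun_prop
  have hK : IsCompact K :=
    (isCompact_closedBall w R₂).of_isClosed_subset (isClosed_Icc.preimage hnorm)
      fun y hy => by simpa [dist_eq_norm] using hy.2
  have hU : IsOpen U := isOpen_Ioo.preimage hnorm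
  have hne {y : ℝ²} (hy : R₁ ≤ ‖y - w‖) : y ≠ w := by
    rintro rfl
    simp only [sub_self, norm_zero] at hy
    linarith
  have hbarrier {y : ℝ²} (hy : R₁ ≤ ‖y - w‖) := contDiffAt_logBarrier ε c (hne hy)
  have hu {y : ℝ²} (hy : y ∈ U) : ContDiffAt ℝ 2 u y := hC2.contDiffAt (hU.mem_nhds hy)
  obtain ⟨x₀, ⟨hx₀₁, hx₀₂⟩, hx₀U, hmax⟩ := exists_isMaxOn_notMem_of_lapl_pos
    (F := fun y => u y + logBarrier ε c w y) hK ⟨x, hx₁, hx₂⟩ hU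
    (fun y hy => ⟨hy.1.le, hy.2.le⟩)
    (hcont.add fun y hy => (hbarrier hy.1).continuousAt.continuousWithinAt)
    (fun y hy => (hu hy).add (hbarrier hy.1.le))
    (fun y hy => by
      rw [lapl_add (hu hy) (hbarrier hy.1.le), lapl_logBarrier ε c (hne hy.1.le)]
      linarith [hsub y hy.1 hy.2])
  refine le_trans (hmax ⟨hx₁, hx₂⟩) ?_
  rcases hx₀₁.eq_or_lt with hin | hin
  · have hu₀ := hinner x₀ hin.symm
    have hR : R₁ ^ 2 ≤ R₂ ^ 2 := pow_le_pow_left₀ hR₁.le (hin ▸ hx₀₂) 2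
    dsimp only [logBarrier]
    rw [← hin]
    linarith [mul_le_mul_of_nonneg_left hR hε.le]
  rcases hx₀₂.eq_or_lt with hout | hout
  · have hu₀ := houter x₀ hout
    dsimp only [logBarrier]
    rw [hout]
    linarith
  exact absurd ⟨hin, hout⟩ hx₀U

theorem le_mul_log_sub_log_of_lapl_nonneg (hR₁ : 0 < R₁)
    (hcont : ContinuousOn u {x | R₁ ≤ ‖x - w‖ ∧ ‖x - w‖ ≤ R₂})
    (hC2 : ContDiffOn ℝ 2 u {x | R₁ < ‖x - w‖ ∧ ‖x - w‖ < R₂})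
    (hsub : ∀ x, R₁ < ‖x - w‖ → ‖x - w‖ < R₂ → 0 ≤ lapl u x)
    (hinner : ∀ x, ‖x - w‖ = R₁ → u x ≤ 0)
    (houter : ∀ x, ‖x - w‖ = R₂ → u x ≤ c * (Real.log R₂ - Real.log R₁))
    {x : ℝ²} (hx₁ : R₁ ≤ ‖x - w‖) (hx₂ : ‖x - w‖ ≤ R₂) :
    u x ≤ c * (Real.log ‖x - w‖ - Real.log R₁) := by
  have hR₂ : 0 < R₂ ^ 2 := pow_pos (hR₁.trans_le (hx₁.trans hx₂)) 2
  refine le_of_forall_pos_le_add fun δ hδ => ?_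
  have hε : 0 < δ / R₂ ^ 2 := div_pos hδ hR₂
  have hbound := add_logBarrier_le_of_lapl_nonneg hR₁ hcont hC2 hsub hinner houter hε hx₁ hx₂
  rw [logBarrier, div_mul_cancel₀ _ hR₂.ne'] at hbound
  nlinarith [mul_nonneg hε.le (sq_nonneg ‖x - w‖)]

end Annulus

/-- A subharmonic function on the annulus `{R ≤ |x-w| ≤ 3R/2} ⊆ ℝ²` with `u ≤ 0` on
the inner sphere and `u ≤ M` on the outer sphere grows at most linearly away from
the inner sphere: `u(x) ≤ (M/(R log(3/2)))·(|x-w| - R)`. -/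
theorem stmt19 (R M : ℝ) (hR : 0 < R) (hM : 0 ≤ M)
    (w : EuclideanSpace ℝ (Fin 2))
    (u : EuclideanSpace ℝ (Fin 2) → ℝ)
    (hcont : ContinuousOn u {x | R ≤ ‖x - w‖ ∧ ‖x - w‖ ≤ 3*R/2})
    (hC2 : ContDiffOn ℝ 2 u {x | R < ‖x - w‖ ∧ ‖x - w‖ < 3*R/2})
    (hsub : ∀ x, R < ‖x - w‖ → ‖x - w‖ < 3*R/2 → 0 ≤ lapl u x)
    (hinner : ∀ x, ‖x - w‖ = R → u x ≤ 0)
    (houter : ∀ x, ‖x - w‖ = 3*R/2 → u x ≤ M) :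
    ∀ x, R ≤ ‖x - w‖ → ‖x - w‖ ≤ 3*R/2 →
      u x ≤ (M / (R * Real.log (3/2))) * (‖x - w‖ - R) := by
  intro x hx₁ hx₂
  have hlog : 0 < Real.log (3 / 2) := Real.log_pos (by norm_num)
  have hlog_outer : Real.log (3 * R / 2) - Real.log R = Real.log (3 / 2) := by
    rw [← Real.log_div (by positivity) hR.ne', mul_div_right_comm, mul_div_cancel_right₀ _ hR.ne']
  have hcomparison := le_mul_log_sub_log_of_lapl_nonneg (c := M / Real.log (3 / 2)) hR hcont hC2
    hsub hinner (fun y hy => by rw [hlog_outer, div_mul_cancel₀ _ hlog.ne']; exact houter y hy)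
    hx₁ hx₂
  have hlog_le : Real.log ‖x - w‖ - Real.log R ≤ (‖x - w‖ - R) / R := by
    rw [← Real.log_div (hR.trans_le hx₁).ne' hR.ne', sub_div, div_self hR.ne']
    exact Real.log_le_sub_one_of_pos (div_pos (hR.trans_le hx₁) hR)
  calc u x ≤ M / Real.log (3 / 2) * (Real.log ‖x - w‖ - Real.log R) := hcomparison
    _ ≤ M / Real.log (3 / 2) * ((‖x - w‖ - R) / R) :=
      mul_le_mul_of_nonneg_left hlog_le (div_nonneg hM hlog.le)
    _ = M / (R * Real.log (3 / 2)) * (‖x - w‖ - R) := by ring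
end
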